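/- For any 2-monad 𝕋 = (T,m,e) on Q-Cat, lax extensions of 𝕋 to Q-Dist correspond bijectively to distributive laws of 𝕋 over the presheaf 2-monad 𝔓, via the correspondence ←(T̂φ) = λ_X·T(←φ) and λ_X = ←(T̂((y_X)_*)). In particular, under this correspondence the lax extension T̂ satisfies φ∘e_X^* ≤ e_Y^*∘T̂φ if and only if λ satisfies the lax T-unit law (d), and T̂ satisfies T̂T̂φ∘m_X^* ≤ m_Y^*∘T̂φ if and only if λ satisfies the lax T-multiplication law (e). -/

import Mathlib

/-!
Common framework: quantaloids, `Q`-categories, `Q`-functors, `Q`-distributors,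
(co)presheaf constructions, 2-monads on `Q`-Cat, lax distributive laws over the
presheaf 2-monad, and lax extensions to `Q`-Dist.
-/

set_option autoImplicit false

universe u

namespace QT

/-- A (small) quantaloid: a category enriched in complete lattices, with
composition preserving suprema in each variable. -/
structure Quantaloid : Type (u + 1) where
  Obj : Type u
  Hom : Obj → Obj → Type u
  lat : ∀ a b, CompleteLattice (Hom a b)
  comp : ∀ {a b c}, Hom b c → Hom a b → Hom a c
  idm : ∀ a, Hom a a
  comp_assoc : ∀ {a b c d} (w : Hom c d) (v : Hom b c) (u : Hom a b),
    comp (comp w v) u = comp w (comp v u)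
  comp_idm : ∀ {a b} (u : Hom a b), comp u (idm a) = u
  idm_comp : ∀ {a b} (u : Hom a b), comp (idm b) u = u
  comp_sSup : ∀ {a b c} (v : Hom b c) (S : Set (Hom a b)),
    comp v (sSup S) = ⨆ u ∈ S, comp v u
  sSup_comp : ∀ {a b c} (S : Set (Hom b c)) (u : Hom a b),
    comp (sSup S) u = ⨆ v ∈ S, comp v u

attribute [instance] Quantaloid.lat

namespace Quantaloid

variable {Q : Quantaloid.{u}}

theorem comp_iSup {a b c : Q.Obj} (v : Q.Hom b c) {ι : Sort*} (f : ι → Q.Hom a b) :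
    Q.comp v (⨆ i, f i) = ⨆ i, Q.comp v (f i) := by
  rw [iSup, Q.comp_sSup, iSup_range]

theorem iSup_comp {a b c : Q.Obj} {ι : Sort*} (f : ι → Q.Hom b c) (u : Q.Hom a b) :
    Q.comp (⨆ i, f i) u = ⨆ i, Q.comp (f i) u := by
  rw [iSup, Q.sSup_comp, iSup_range]

theorem comp_le_comp {a b c : Q.Obj} {v v' : Q.Hom b c} {u u' : Q.Hom a b}
    (hv : v ≤ v') (hu : u ≤ u') : Q.comp v u ≤ Q.comp v' u' := by
  have h1 : Q.comp v' u ≤ Q.comp v' u' := by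
    have h := Q.comp_sSup v' {u, u'}
    rw [sSup_pair, sup_eq_right.mpr hu] at h
    rw [h]
    exact le_biSup (fun x => Q.comp v' x) (Set.mem_insert _ _)
  have h2 : Q.comp v u ≤ Q.comp v' u := by
    have h := Q.sSup_comp {v, v'} u
    rw [sSup_pair, sup_eq_right.mpr hv] at h
    rw [h]
    exact le_biSup (fun x => Q.comp x u) (Set.mem_insert _ _)
  exact le_trans h2 h1

/-- Internal hom `w ↙ u` (right adjoint to `- ∘ u`). -/
def lda {a b c : Q.Obj} (w : Q.Hom a c) (u : Q.Hom a b) : Q.Hom b c :=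
  sSup {v | Q.comp v u ≤ w}

/-- Internal hom `v ↘ w` (right adjoint to `v ∘ -`). -/
def rda {a b c : Q.Obj} (v : Q.Hom b c) (w : Q.Hom a c) : Q.Hom a b :=
  sSup {u | Q.comp v u ≤ w}

theorem le_lda {a b c : Q.Obj} {v : Q.Hom b c} {u : Q.Hom a b} {w : Q.Hom a c} :
    Q.comp v u ≤ w ↔ v ≤ lda w u := by
  constructor
  · exact fun h => le_sSup h
  · intro h
    calc Q.comp v u ≤ Q.comp (lda w u) u := comp_le_comp h le_rfl
      _ ≤ w := by
          rw [lda, Q.sSup_comp]; exact iSup₂_le fun v' hv' => hv'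

theorem le_rda {a b c : Q.Obj} {v : Q.Hom b c} {u : Q.Hom a b} {w : Q.Hom a c} :
    Q.comp v u ≤ w ↔ u ≤ rda v w := by
  constructor
  · exact fun h => le_sSup h
  · intro h
    calc Q.comp v u ≤ Q.comp v (rda v w) := comp_le_comp le_rfl h
      _ ≤ w := by
          rw [rda, Q.comp_sSup]; exact iSup₂_le fun u' hu' => hu'

end Quantaloid

variable {Q : Quantaloid.{u}}

/-- `Q`-relations between families of sets indexed by the objects of `Q`
(i.e. sets over `ob Q`, presented fibrewise). -/
abbrev QRel (Q : Quantaloid.{u}) (X Y : Q.Obj → Type u) : Type u :=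
  ∀ p q, X p → Y q → Q.Hom p q

/-- Composition of `Q`-relations. -/
def QRel.comp {X Y Z : Q.Obj → Type u} (ψ : QRel Q Y Z) (φ : QRel Q X Y) : QRel Q X Z :=
  fun p r x z => ⨆ q, ⨆ y : Y q, Q.comp (ψ q r y z) (φ p q x y)

theorem QRel.comp_mono {X Y Z : Q.Obj → Type u} {ψ ψ' : QRel Q Y Z} {φ φ' : QRel Q X Y}
    (h1 : ψ ≤ ψ') (h2 : φ ≤ φ') : QRel.comp ψ φ ≤ QRel.comp ψ' φ' := by
  intro p r x z
  exact iSup_mono fun q => iSup_mono fun y =>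
    Quantaloid.comp_le_comp (h1 q r y z) (h2 p q x y)

theorem QRel.comp_assoc {W X Y Z : Q.Obj → Type u}
    (χ : QRel Q Y Z) (ψ : QRel Q X Y) (φ : QRel Q W X) :
    QRel.comp (QRel.comp χ ψ) φ = QRel.comp χ (QRel.comp ψ φ) := by
  funext p s w z
  simp only [QRel.comp, Quantaloid.iSup_comp, Quantaloid.comp_iSup]
  apply le_antisymm
  · exact iSup₂_le fun q x => iSup₂_le fun r y =>
      le_iSup_of_le r (le_iSup_of_le y (le_iSup_of_le q (le_iSup_of_le x
        (Q.comp_assoc _ _ _).le)))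
  · exact iSup₂_le fun r y => iSup₂_le fun q x =>
      le_iSup_of_le q (le_iSup_of_le x (le_iSup_of_le r (le_iSup_of_le y
        (Q.comp_assoc _ _ _).ge)))

/-- A (small) `Q`-category. -/
structure QCat (Q : Quantaloid.{u}) : Type (u + 1) where
  el : Q.Obj → Type u
  hom : QRel Q el el
  refl : ∀ p (x : el p), Q.idm p ≤ hom p p x x
  trans : QRel.comp hom hom ≤ hom

/-- Pointwise transitivity in a `Q`-category. -/
theorem QCat.hom_comp_le (X : QCat Q) {p q r : Q.Obj}
    (x : X.el p) (y : X.el q) (z : X.el r) :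
    Q.comp (X.hom q r y z) (X.hom p q x y) ≤ X.hom p r x z :=
  le_trans
    (le_iSup_of_le q (le_iSup (fun y' : X.el q => Q.comp (X.hom q r y' z) (X.hom p q x y')) y))
    (X.trans p r x z)

/-- Any `Q`-relation into a `Q`-category embeds into its post-composite with the hom. -/
theorem QRel.le_hom_comp {W : Q.Obj → Type u} {Z : QCat Q} (ρ : QRel Q W Z.el) :
    ρ ≤ QRel.comp Z.hom ρ := by
  intro p q x z
  calc ρ p q x z = Q.comp (Q.idm q) (ρ p q x z) := (Q.idm_comp _).symm
    _ ≤ Q.comp (Z.hom q q z z) (ρ p q x z) := Quantaloid.comp_le_comp (Z.refl q z) le_rfl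
    _ ≤ _ := le_iSup_of_le q
        (le_iSup (fun z' : Z.el q => Q.comp (Z.hom q q z' z) (ρ p q x z')) z)

/-- Any `Q`-relation out of a `Q`-category embeds into its pre-composite with the hom. -/
theorem QRel.le_comp_hom {X : QCat Q} {W : Q.Obj → Type u} (ρ : QRel Q X.el W) :
    ρ ≤ QRel.comp ρ X.hom := by
  intro p q x z
  calc ρ p q x z = Q.comp (ρ p q x z) (Q.idm p) := (Q.comp_idm _).symm
    _ ≤ Q.comp (ρ p q x z) (X.hom p p x x) := Quantaloid.comp_le_comp le_rfl (X.refl p x)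
    _ ≤ _ := le_iSup_of_le p
        (le_iSup (fun x' : X.el p => Q.comp (ρ p q x' z) (X.hom p p x x')) x)

/-- A `Q`-functor. -/
structure QFun (X Y : QCat Q) : Type u where
  app : ∀ p, X.el p → Y.el p
  mono : ∀ p q (x : X.el p) (x' : X.el q),
    X.hom p q x x' ≤ Y.hom p q (app p x) (app q x')

def QFun.id (X : QCat Q) : QFun X X :=
  ⟨fun _ x => x, fun _ _ _ _ => le_rfl⟩

def QFun.comp {X Y Z : QCat Q} (g : QFun Y Z) (f : QFun X Y) : QFun X Z :=
  ⟨fun p x => g.app p (f.app p x),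
   fun p q x x' => le_trans (f.mono p q x x') (g.mono p q (f.app p x) (f.app q x'))⟩

/-- The (pointwise) order of `Q`-functors. -/
instance {X Y : QCat Q} : Preorder (QFun X Y) where
  le f g := ∀ p (x : X.el p), Q.idm p ≤ Y.hom p p (f.app p x) (g.app p x)
  le_refl f p x := Y.refl p (f.app p x)
  le_trans f g h h1 h2 := by
    intro p x
    calc Q.idm p = Q.comp (Q.idm p) (Q.idm p) := (Q.comp_idm _).symm
      _ ≤ Q.comp (Y.hom p p (g.app p x) (h.app p x)) (Y.hom p p (f.app p x) (g.app p x)) :=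
          Quantaloid.comp_le_comp (h2 p x) (h1 p x)
      _ ≤ Y.hom p p (f.app p x) (h.app p x) := Y.hom_comp_le _ _ _

/-- A `Q`-distributor between `Q`-categories. -/
structure QDist (X Y : QCat Q) : Type u where
  rel : QRel Q X.el Y.el
  compat : QRel.comp Y.hom (QRel.comp rel X.hom) ≤ rel

instance {X Y : QCat Q} : PartialOrder (QDist X Y) where
  le φ ψ := φ.rel ≤ ψ.rel
  le_refl φ := le_refl φ.rel
  le_trans _ _ _ h h' := by
    intro p q x y
    exact le_trans (h p q x y) (h' p q x y)
  le_antisymm φ ψ h h' := by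
    have hr : φ.rel = ψ.rel := le_antisymm h h'
    cases φ; cases ψ; cases hr; rfl

theorem QDist.hom_comp_le {X Y : QCat Q} (φ : QDist X Y) :
    QRel.comp Y.hom φ.rel ≤ φ.rel :=
  le_trans (QRel.comp_mono le_rfl (QRel.le_comp_hom φ.rel)) φ.compat

theorem QDist.comp_hom_le {X Y : QCat Q} (φ : QDist X Y) :
    QRel.comp φ.rel X.hom ≤ φ.rel :=
  le_trans (QRel.le_hom_comp _) φ.compat

theorem QDist.rel_comp_hom {X Y : QCat Q} (φ : QDist X Y) {p q r : Q.Obj}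
    (x : X.el p) (x' : X.el q) (y : Y.el r) :
    Q.comp (φ.rel q r x' y) (X.hom p q x x') ≤ φ.rel p r x y :=
  le_trans
    (le_iSup_of_le q (le_iSup (fun x'' : X.el q => Q.comp (φ.rel q r x'' y) (X.hom p q x x'')) x'))
    (φ.comp_hom_le p r x y)

theorem QDist.hom_comp_rel {X Y : QCat Q} (φ : QDist X Y) {p q r : Q.Obj}
    (x : X.el p) (y : Y.el q) (y' : Y.el r) :
    Q.comp (Y.hom q r y y') (φ.rel p q x y) ≤ φ.rel p r x y' :=
  le_trans
    (le_iSup_of_le q (le_iSup (fun y'' : Y.el q => Q.comp (Y.hom q r y'' y') (φ.rel p q x y'')) y))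
    (φ.hom_comp_le p r x y')

/-- Composition of `Q`-distributors. -/
def QDist.comp {X Y Z : QCat Q} (ψ : QDist Y Z) (φ : QDist X Y) : QDist X Z :=
  ⟨QRel.comp ψ.rel φ.rel, by
    calc QRel.comp Z.hom (QRel.comp (QRel.comp ψ.rel φ.rel) X.hom)
        = QRel.comp (QRel.comp Z.hom ψ.rel) (QRel.comp φ.rel X.hom) := by
          rw [QRel.comp_assoc, QRel.comp_assoc]
      _ ≤ QRel.comp ψ.rel φ.rel :=
          QRel.comp_mono ψ.hom_comp_le φ.comp_hom_le⟩

/-- The identity distributor `1_X^*` on a `Q`-category. -/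
def QCat.homDist (X : QCat Q) : QDist X X :=
  ⟨X.hom, le_trans (QRel.comp_mono le_rfl X.trans) X.trans⟩

/-- The graph `f_*` of a `Q`-functor. -/
def QFun.graph {X Y : QCat Q} (f : QFun X Y) : QDist X Y :=
  ⟨fun p q x y => Y.hom p q (f.app p x) y, by
    intro p q x y
    simp only [QRel.comp, Quantaloid.comp_iSup, Quantaloid.iSup_comp]
    refine iSup₂_le fun q' y' => iSup₂_le fun p' x' => ?_
    calc Q.comp (Y.hom q' q y' y) (Q.comp (Y.hom p' q' (f.app p' x') y') (X.hom p p' x x'))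
        ≤ Q.comp (Y.hom q' q y' y)
            (Q.comp (Y.hom p' q' (f.app p' x') y') (Y.hom p p' (f.app p x) (f.app p' x'))) :=
          Quantaloid.comp_le_comp le_rfl
            (Quantaloid.comp_le_comp le_rfl (f.mono p p' x x'))
      _ ≤ Q.comp (Y.hom q' q y' y) (Y.hom p q' (f.app p x) y') :=
          Quantaloid.comp_le_comp le_rfl (Y.hom_comp_le _ _ _)
      _ ≤ Y.hom p q (f.app p x) y := Y.hom_comp_le _ _ _⟩

/-- The cograph `f^*` of a `Q`-functor. -/
def QFun.cograph {X Y : QCat Q} (f : QFun X Y) : QDist Y X :=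
  ⟨fun p q y x => Y.hom p q y (f.app q x), by
    intro p q y x
    simp only [QRel.comp, Quantaloid.comp_iSup, Quantaloid.iSup_comp]
    refine iSup₂_le fun q' x' => iSup₂_le fun p' y' => ?_
    calc Q.comp (X.hom q' q x' x) (Q.comp (Y.hom p' q' y' (f.app q' x')) (Y.hom p p' y y'))
        ≤ Q.comp (Y.hom q' q (f.app q' x') (f.app q x))
            (Q.comp (Y.hom p' q' y' (f.app q' x')) (Y.hom p p' y y')) :=
          Quantaloid.comp_le_comp (f.mono q' q x' x) le_rfl
      _ ≤ Q.comp (Y.hom q' q (f.app q' x') (f.app q x)) (Y.hom p q' y (f.app q' x')) :=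
          Quantaloid.comp_le_comp le_rfl (Y.hom_comp_le _ _ _)
      _ ≤ Y.hom p q y (f.app q x) := Y.hom_comp_le _ _ _⟩

/-- The presheaf `Q`-category `P X`. -/
def QCat.P (X : QCat Q) : QCat Q where
  el s := { σ : ∀ p, X.el p → Q.Hom p s //
    ∀ p q (x : X.el p) (x' : X.el q), Q.comp (σ q x') (X.hom p q x x') ≤ σ p x }
  hom s s' σ σ' := ⨅ p, ⨅ x : X.el p, Quantaloid.lda (σ'.1 p x) (σ.1 p x)
  refl := by
    intro s σ
    refine le_iInf fun p => le_iInf fun x => Quantaloid.le_lda.mp ?_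
    rw [Q.idm_comp]
  trans := by
    intro s s'' σ σ''
    refine iSup₂_le fun s' σ' => ?_
    refine le_iInf fun p => le_iInf fun x => Quantaloid.le_lda.mp ?_
    rw [Q.comp_assoc]
    have h1 : Q.comp (⨅ p', ⨅ x' : X.el p', Quantaloid.lda (σ'.1 p' x') (σ.1 p' x'))
        (σ.1 p x) ≤ σ'.1 p x :=
      Quantaloid.le_lda.mpr (le_trans (iInf_le _ p) (iInf_le _ x))
    have h2 : Q.comp (⨅ p', ⨅ x' : X.el p', Quantaloid.lda (σ''.1 p' x') (σ'.1 p' x'))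
        (σ'.1 p x) ≤ σ''.1 p x :=
      Quantaloid.le_lda.mpr (le_trans (iInf_le _ p) (iInf_le _ x))
    exact le_trans (Quantaloid.comp_le_comp le_rfl h1) h2

/-- The copresheaf `Q`-category `P† X`. -/
def QCat.Pd (X : QCat Q) : QCat Q where
  el s := { τ : ∀ q, X.el q → Q.Hom s q //
    ∀ p q (x : X.el p) (x' : X.el q), Q.comp (X.hom p q x x') (τ p x) ≤ τ q x' }
  hom s s' τ τ' := ⨅ q, ⨅ x : X.el q, Quantaloid.rda (τ'.1 q x) (τ.1 q x)
  refl := by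
    intro s τ
    refine le_iInf fun q => le_iInf fun x => Quantaloid.le_rda.mp ?_
    rw [Q.comp_idm]
  trans := by
    intro s s'' τ τ''
    refine iSup₂_le fun s' τ' => ?_
    refine le_iInf fun q => le_iInf fun x => Quantaloid.le_rda.mp ?_
    rw [← Q.comp_assoc]
    have h1 : Q.comp (τ''.1 q x)
        (⨅ q', ⨅ x' : X.el q', Quantaloid.rda (τ''.1 q' x') (τ'.1 q' x')) ≤ τ'.1 q x :=
      Quantaloid.le_rda.mpr (le_trans (iInf_le _ q) (iInf_le _ x))
    have h2 : Q.comp (τ'.1 q x)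
        (⨅ q', ⨅ x' : X.el q', Quantaloid.rda (τ'.1 q' x') (τ.1 q' x')) ≤ τ.1 q x :=
      Quantaloid.le_rda.mpr (le_trans (iInf_le _ q) (iInf_le _ x))
    exact le_trans (Quantaloid.comp_le_comp h1 le_rfl) h2

/-- The Yoneda embedding `y_X : X → P X`. -/
def QCat.y (X : QCat Q) : QFun X X.P where
  app p x := ⟨fun q x' => X.hom q p x' x,
    fun p' q' x1 x2 => X.hom_comp_le x1 x2 x⟩
  mono := by
    intro p q x x'
    refine le_iInf fun r => le_iInf fun x'' => Quantaloid.le_lda.mp ?_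
    exact X.hom_comp_le x'' x x'

/-- The co-Yoneda embedding `y†_X : X → P† X`. -/
def QCat.yd (X : QCat Q) : QFun X X.Pd where
  app p x := ⟨fun q x' => X.hom p q x x',
    fun p' q' x1 x2 => X.hom_comp_le x x1 x2⟩
  mono := by
    intro p q x x'
    refine le_iInf fun r => le_iInf fun x'' => Quantaloid.le_rda.mp ?_
    exact X.hom_comp_le x x' x''

/-- `φ^→ : P Y → P X`, `τ ↦ τ ∘ φ`. -/
def QDist.fwd {X Y : QCat Q} (φ : QDist X Y) : QFun Y.P X.P where
  app s τ := ⟨fun p x => ⨆ q, ⨆ y : Y.el q, Q.comp (τ.1 q y) (φ.rel p q x y), by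
    intro p q x x'
    rw [Quantaloid.iSup_comp]
    refine iSup_le fun r => ?_
    rw [Quantaloid.iSup_comp]
    refine iSup_le fun y => ?_
    rw [Q.comp_assoc]
    exact le_iSup_of_le r (le_iSup_of_le y
      (Quantaloid.comp_le_comp le_rfl (φ.rel_comp_hom x x' y)))⟩
  mono := by
    intro s s' τ τ'
    refine le_iInf fun p => le_iInf fun x => Quantaloid.le_lda.mp ?_
    rw [Quantaloid.comp_iSup]
    refine iSup_le fun r => ?_
    rw [Quantaloid.comp_iSup]
    refine iSup_le fun y => ?_
    rw [← Q.comp_assoc]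
    have h : Q.comp (Y.P.hom s s' τ τ') (τ.1 r y) ≤ τ'.1 r y :=
      Quantaloid.le_lda.mpr (le_trans (iInf_le _ r) (iInf_le _ y))
    exact le_iSup_of_le r (le_iSup_of_le y (Quantaloid.comp_le_comp h le_rfl))

/-- `φ^↞ : P† X → P† Y`, `σ ↦ φ ∘ σ`. -/
def QDist.bwd {X Y : QCat Q} (φ : QDist X Y) : QFun X.Pd Y.Pd where
  app s σ := ⟨fun q y => ⨆ p, ⨆ x : X.el p, Q.comp (φ.rel p q x y) (σ.1 p x), by
    intro p q y y'
    rw [Quantaloid.comp_iSup]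
    refine iSup_le fun r => ?_
    rw [Quantaloid.comp_iSup]
    refine iSup_le fun x => ?_
    rw [← Q.comp_assoc]
    exact le_iSup_of_le r (le_iSup_of_le x
      (Quantaloid.comp_le_comp (φ.hom_comp_rel x y y') le_rfl))⟩
  mono := by
    intro s s' σ σ'
    refine le_iInf fun q => le_iInf fun y => Quantaloid.le_rda.mp ?_
    rw [Quantaloid.iSup_comp]
    refine iSup_le fun r => ?_
    rw [Quantaloid.iSup_comp]
    refine iSup_le fun x => ?_
    rw [Q.comp_assoc]
    have h : Q.comp (σ'.1 r x) (X.Pd.hom s s' σ σ') ≤ σ.1 r x :=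
      Quantaloid.le_rda.mpr (le_trans (iInf_le _ r) (iInf_le _ x))
    exact le_iSup_of_le r (le_iSup_of_le x (Quantaloid.comp_le_comp le_rfl h))

/-- `φ_→ : P X → P Y`, `σ ↦ σ ↙ φ`. -/
def QDist.fwdr {X Y : QCat Q} (φ : QDist X Y) : QFun X.P Y.P where
  app s σ := ⟨fun q y => ⨅ p, ⨅ x : X.el p, Quantaloid.lda (σ.1 p x) (φ.rel p q x y), by
    intro q q' y y'
    refine le_iInf fun p => le_iInf fun x => Quantaloid.le_lda.mp ?_
    rw [Q.comp_assoc]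
    have h1 : Q.comp (Y.hom q q' y y') (φ.rel p q x y) ≤ φ.rel p q' x y' :=
      φ.hom_comp_rel x y y'
    have h2 : Q.comp ((⨅ p', ⨅ x' : X.el p',
        Quantaloid.lda (σ.1 p' x') (φ.rel p' q' x' y')) : Q.Hom q' s) (φ.rel p q' x y')
        ≤ σ.1 p x :=
      Quantaloid.le_lda.mpr (le_trans (iInf_le _ p) (iInf_le _ x))
    exact le_trans (Quantaloid.comp_le_comp le_rfl h1) h2⟩
  mono := by
    intro s s' σ σ'
    refine le_iInf fun q => le_iInf fun y => Quantaloid.le_lda.mp ?_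
    refine le_iInf fun p => le_iInf fun x => Quantaloid.le_lda.mp ?_
    rw [Q.comp_assoc]
    have h1 : Q.comp ((⨅ p', ⨅ x' : X.el p',
        Quantaloid.lda (σ.1 p' x') (φ.rel p' q x' y)) : Q.Hom q s) (φ.rel p q x y)
        ≤ σ.1 p x :=
      Quantaloid.le_lda.mpr (le_trans (iInf_le _ p) (iInf_le _ x))
    have h2 : Q.comp (X.P.hom s s' σ σ') (σ.1 p x) ≤ σ'.1 p x :=
      Quantaloid.le_lda.mpr (le_trans (iInf_le _ p) (iInf_le _ x))
    exact le_trans (Quantaloid.comp_le_comp le_rfl h1) h2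

/-- Isbell `φ↑ : P X → P† Y`, `σ ↦ φ ↙ σ`. -/
def QDist.up {X Y : QCat Q} (φ : QDist X Y) : QFun X.P Y.Pd where
  app s σ := ⟨fun q y => ⨅ p, ⨅ x : X.el p, Quantaloid.lda (φ.rel p q x y) (σ.1 p x), by
    intro q q' y y'
    refine le_iInf fun p => le_iInf fun x => Quantaloid.le_lda.mp ?_
    rw [Q.comp_assoc]
    have h1 : Q.comp ((⨅ p', ⨅ x' : X.el p',
        Quantaloid.lda (φ.rel p' q x' y) (σ.1 p' x')) : Q.Hom s q) (σ.1 p x)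
        ≤ φ.rel p q x y :=
      Quantaloid.le_lda.mpr (le_trans (iInf_le _ p) (iInf_le _ x))
    exact le_trans (Quantaloid.comp_le_comp le_rfl h1) (φ.hom_comp_rel x y y')⟩
  mono := by
    intro s s' σ σ'
    refine le_iInf fun q => le_iInf fun y => Quantaloid.le_rda.mp ?_
    refine le_iInf fun p => le_iInf fun x => Quantaloid.le_lda.mp ?_
    rw [Q.comp_assoc]
    have h1 : Q.comp (X.P.hom s s' σ σ') (σ.1 p x) ≤ σ'.1 p x :=
      Quantaloid.le_lda.mpr (le_trans (iInf_le _ p) (iInf_le _ x))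
    have h2 : Q.comp ((⨅ p', ⨅ x' : X.el p',
        Quantaloid.lda (φ.rel p' q x' y) (σ'.1 p' x')) : Q.Hom s' q) (σ'.1 p x)
        ≤ φ.rel p q x y :=
      Quantaloid.le_lda.mpr (le_trans (iInf_le _ p) (iInf_le _ x))
    exact le_trans (Quantaloid.comp_le_comp le_rfl h1) h2

/-- Isbell `φ↓ : P† Y → P X`, `τ ↦ τ ↘ φ`. -/
def QDist.down {X Y : QCat Q} (φ : QDist X Y) : QFun Y.Pd X.P where
  app s τ := ⟨fun p x => ⨅ q, ⨅ y : Y.el q, Quantaloid.rda (τ.1 q y) (φ.rel p q x y), by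
    intro p p' x x'
    refine le_iInf fun q => le_iInf fun y => Quantaloid.le_rda.mp ?_
    rw [← Q.comp_assoc]
    have h1 : Q.comp (τ.1 q y) ((⨅ q', ⨅ y' : Y.el q',
        Quantaloid.rda (τ.1 q' y') (φ.rel p' q' x' y')) : Q.Hom p' s)
        ≤ φ.rel p' q x' y :=
      Quantaloid.le_rda.mpr (le_trans (iInf_le _ q) (iInf_le _ y))
    exact le_trans (Quantaloid.comp_le_comp h1 le_rfl) (φ.rel_comp_hom x x' y)⟩
  mono := by
    intro s s' τ τ'
    refine le_iInf fun p => le_iInf fun x => Quantaloid.le_lda.mp ?_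
    refine le_iInf fun q => le_iInf fun y => Quantaloid.le_rda.mp ?_
    rw [← Q.comp_assoc]
    have h1 : Q.comp (τ'.1 q y) (Y.Pd.hom s s' τ τ') ≤ τ.1 q y :=
      Quantaloid.le_rda.mpr (le_trans (iInf_le _ q) (iInf_le _ y))
    have h2 : Q.comp (τ.1 q y) ((⨅ q', ⨅ y' : Y.el q',
        Quantaloid.rda (τ.1 q' y') (φ.rel p q' x y')) : Q.Hom p s)
        ≤ φ.rel p q x y :=
      Quantaloid.le_rda.mpr (le_trans (iInf_le _ q) (iInf_le _ y))
    exact le_trans (Quantaloid.comp_le_comp h1 le_rfl) h2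

/-- The transpose `←φ : Y → P X` of a distributor `φ : X ⇸ Y`. -/
def QDist.transpose {X Y : QCat Q} (φ : QDist X Y) : QFun Y X.P where
  app q y := ⟨fun p x => φ.rel p q x y,
    fun p q' x x' => φ.rel_comp_hom x x' y⟩
  mono := by
    intro q q' y y'
    refine le_iInf fun p => le_iInf fun x => Quantaloid.le_lda.mp ?_
    exact φ.hom_comp_rel x y y'

/-- The inverse of transposition. -/
def QFun.untranspose {X Y : QCat Q} (g : QFun Y X.P) : QDist X Y :=
  ⟨fun p q x y => (g.app q y).1 p x, by
    intro p q x y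
    simp only [QRel.comp, Quantaloid.comp_iSup, Quantaloid.iSup_comp]
    refine iSup₂_le fun q' y' => iSup₂_le fun p' x' => ?_
    have h1 : Q.comp ((g.app q' y').1 p' x') (X.hom p p' x x') ≤ (g.app q' y').1 p x :=
      (g.app q' y').2 p p' x x'
    have h2 : Q.comp (Y.hom q' q y' y) ((g.app q' y').1 p x) ≤ (g.app q y).1 p x :=
      Quantaloid.le_lda.mpr
        (le_trans (g.mono q' q y' y) (le_trans (iInf_le _ p) (iInf_le _ x)))
    exact le_trans (Quantaloid.comp_le_comp le_rfl h1) h2⟩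

/-- `f_! := (f^*)^→ : P X → P Y`. -/
def pshf {X Y : QCat Q} (f : QFun X Y) : QFun X.P Y.P := f.cograph.fwd

/-- `f^! := (f_*)^→ : P Y → P X`. -/
def pshb {X Y : QCat Q} (f : QFun X Y) : QFun Y.P X.P := f.graph.fwd

/-- `f_† := (f_*)^↞ : P† X → P† Y`. -/
def cpsf {X Y : QCat Q} (f : QFun X Y) : QFun X.Pd Y.Pd := f.graph.bwd

/-- `f^† := (f^*)^↞ : P† Y → P† X`. -/
def cpsb {X Y : QCat Q} (f : QFun X Y) : QFun Y.Pd X.Pd := f.cograph.bwd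

/-- `sup_{P X} = y_X^! : P P X → P X`: the multiplication of the presheaf 2-monad. -/
def supP (X : QCat Q) : QFun X.P.P X.P := pshb X.y

/-- `inf_{P† X} = (y†_X)^† : P† P† X → P† X`: the multiplication of the copresheaf
2-monad. -/
def infPd (X : QCat Q) : QFun X.Pd.Pd X.Pd := cpsb X.yd

/-- Adjunction `f ⊣ g` in `Q`-Cat. -/
def QAdj {X Y : QCat Q} (f : QFun X Y) (g : QFun Y X) : Prop :=
  QFun.id X ≤ g.comp f ∧ f.comp g ≤ QFun.id Y

/-- Fully faithful `Q`-functors. -/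
def QFun.FullyFaithful {X Y : QCat Q} (f : QFun X Y) : Prop :=
  ∀ p q (x : X.el p) (x' : X.el q), X.hom p q x x' = Y.hom p q (f.app p x) (f.app q x')

/-- A `Q`-closure operation on a `Q`-category. -/
def IsClosureOp (Z : QCat Q) (c : QFun Z Z) : Prop :=
  QFun.id Z ≤ c ∧ c.comp c = c

/-- A 2-functor on `Q`-Cat. -/
structure TwoFunctor (Q : Quantaloid.{u}) : Type (u + 1) where
  obj : QCat Q → QCat Q
  map : ∀ {X Y : QCat Q}, QFun X Y → QFun (obj X) (obj Y)
  map_id : ∀ X : QCat Q, map (QFun.id X) = QFun.id (obj X)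
  map_comp : ∀ {X Y Z : QCat Q} (g : QFun Y Z) (f : QFun X Y),
    map (g.comp f) = (map g).comp (map f)
  map_mono : ∀ {X Y : QCat Q} {f g : QFun X Y}, f ≤ g → map f ≤ map g

/-- A 2-monad on `Q`-Cat. -/
structure TwoMonad (Q : Quantaloid.{u}) extends TwoFunctor Q where
  unit : ∀ X : QCat Q, QFun X (obj X)
  mult : ∀ X : QCat Q, QFun (obj (obj X)) (obj X)
  unit_nat : ∀ {X Y : QCat Q} (f : QFun X Y), (unit Y).comp f = (map f).comp (unit X)
  mult_nat : ∀ {X Y : QCat Q} (f : QFun X Y),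
    (mult Y).comp (map (map f)) = (map f).comp (mult X)
  mult_unit : ∀ X : QCat Q, (mult X).comp (unit (obj X)) = QFun.id (obj X)
  mult_map_unit : ∀ X : QCat Q, (mult X).comp (map (unit X)) = QFun.id (obj X)
  mult_assoc : ∀ X : QCat Q, (mult X).comp (map (mult X)) = (mult X).comp (mult (obj X))

/-- The type of families `λ_X : T P X → P T X`. -/
abbrev LamFamily (T : TwoFunctor Q) : Type (u + 1) :=
  ∀ X : QCat Q, QFun (T.obj X.P) ((T.obj X).P)

/-- Lax naturality law (a): `(Tf)_! ∘ λ_X ≤ λ_Y ∘ T(f_!)`. -/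
def LawA (T : TwoFunctor Q) (lam : LamFamily T) : Prop :=
  ∀ (X Y : QCat Q) (f : QFun X Y),
    (pshf (T.map f)).comp (lam X) ≤ (lam Y).comp (T.map (pshf f))

/-- Lax `P`-unit law (b): `y_{TX} ≤ λ_X ∘ T y_X`. -/
def LawB (T : TwoFunctor Q) (lam : LamFamily T) : Prop :=
  ∀ X : QCat Q, QCat.y (T.obj X) ≤ (lam X).comp (T.map X.y)

/-- The `P`-unit law (b) holding strictly (flatness). -/
def LawBstrict (T : TwoFunctor Q) (lam : LamFamily T) : Prop :=
  ∀ X : QCat Q, (lam X).comp (T.map X.y) = QCat.y (T.obj X)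

/-- Lax `P`-multiplication law (c): `s_{TX} ∘ (λ_X)_! ∘ λ_{PX} ≤ λ_X ∘ T s_X`. -/
def LawC (T : TwoFunctor Q) (lam : LamFamily T) : Prop :=
  ∀ X : QCat Q,
    (supP (T.obj X)).comp ((pshf (lam X)).comp (lam X.P)) ≤ (lam X).comp (T.map (supP X))

/-- Lax `T`-unit law (d): `(e_X)_! ≤ λ_X ∘ e_{PX}`. -/
def LawD (M : TwoMonad Q) (lam : LamFamily M.toTwoFunctor) : Prop :=
  ∀ X : QCat Q, pshf (M.unit X) ≤ (lam X).comp (M.unit X.P)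

/-- Lax `T`-multiplication law (e): `(m_X)_! ∘ λ_{TX} ∘ T λ_X ≤ λ_X ∘ m_{PX}`. -/
def LawE (M : TwoMonad Q) (lam : LamFamily M.toTwoFunctor) : Prop :=
  ∀ X : QCat Q,
    (pshf (M.mult X)).comp ((lam (M.obj X)).comp (M.map (lam X))) ≤ (lam X).comp (M.mult X.P)

def IsDistLawABC (T : TwoFunctor Q) (lam : LamFamily T) : Prop :=
  LawA T lam ∧ LawB T lam ∧ LawC T lam

/-- A (lax) distributive law of the 2-monad `M` over the presheaf 2-monad. -/
def IsDistLaw (M : TwoMonad Q) (lam : LamFamily M.toTwoFunctor) : Prop :=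
  IsDistLawABC M.toTwoFunctor lam ∧ LawD M lam ∧ LawE M lam

/-- A flat distributive law: (b) holds strictly. -/
def IsFlatDistLaw (M : TwoMonad Q) (lam : LamFamily M.toTwoFunctor) : Prop :=
  IsDistLaw M lam ∧ LawBstrict M.toTwoFunctor lam

/-- Lax `λ`-algebra: laws (f) and (g). -/
def IsLaxAlg (M : TwoMonad Q) (lam : LamFamily M.toTwoFunctor) (X : QCat Q)
    (p : QFun (M.obj X) X.P) : Prop :=
  X.y ≤ p.comp (M.unit X) ∧
  (supP X).comp ((pshf p).comp ((lam X).comp (M.map p))) ≤ p.comp (M.mult X)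

/-- Lax `λ`-homomorphism: law (h). -/
def IsLaxHom (M : TwoMonad Q) {X Y : QCat Q}
    (p : QFun (M.obj X) X.P) (q : QFun (M.obj Y) Y.P) (f : QFun X Y) : Prop :=
  (pshf f).comp p ≤ q.comp (M.map f)

/-- The type of families `T̂φ : TX ⇸ TY`, one for each `φ : X ⇸ Y`. -/
abbrev ExtFamily (T : TwoFunctor Q) : Type (u + 1) :=
  ∀ ⦃X Y : QCat Q⦄, QDist X Y → QDist (T.obj X) (T.obj Y)

/-- A lax extension of the 2-functor `T` to `Q`-Dist: conditions (1), (2), (3). -/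
def IsLaxExt (T : TwoFunctor Q) (ext : ExtFamily T) : Prop :=
  (∀ (X Y : QCat Q) (φ φ' : QDist X Y), φ ≤ φ' → ext φ ≤ ext φ') ∧
  (∀ (X Y Z : QCat Q) (φ : QDist X Y) (ψ : QDist Y Z), (ext ψ).comp (ext φ) ≤ ext (ψ.comp φ)) ∧
  (∀ (X Y : QCat Q) (f : QFun X Y),
    (T.map f).graph ≤ ext f.graph ∧ (T.map f).cograph ≤ ext f.cograph)

/-- Condition (4): `φ ∘ e_X^* ≤ e_Y^* ∘ T̂φ`. -/
def ExtLaw4 (M : TwoMonad Q) (ext : ExtFamily M.toTwoFunctor) : Prop :=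
  ∀ (X Y : QCat Q) (φ : QDist X Y),
    φ.comp (M.unit X).cograph ≤ ((M.unit Y).cograph).comp (ext φ)

/-- Condition (5): `T̂T̂φ ∘ m_X^* ≤ m_Y^* ∘ T̂φ`. -/
def ExtLaw5 (M : TwoMonad Q) (ext : ExtFamily M.toTwoFunctor) : Prop :=
  ∀ (X Y : QCat Q) (φ : QDist X Y),
    (ext (ext φ)).comp (M.mult X).cograph ≤ ((M.mult Y).cograph).comp (ext φ)

/-- A lax extension of the 2-monad `M` to `Q`-Dist. -/
def IsMonadLaxExt (M : TwoMonad Q) (ext : ExtFamily M.toTwoFunctor) : Prop :=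
  IsLaxExt M.toTwoFunctor ext ∧ ExtLaw4 M ext ∧ ExtLaw5 M ext

/-- Flatness of a lax extension: `T̂ 1_X^* = 1_{TX}^*`. -/
def FlatExt (T : TwoFunctor Q) (ext : ExtFamily T) : Prop :=
  ∀ X : QCat Q, ext X.homDist = (T.obj X).homDist

/-- From a lax distributive law to a lax extension: `←(T̂φ) = λ_X ∘ T(←φ)`. -/
def PhiExt (T : TwoFunctor Q) (lam : LamFamily T) : ExtFamily T :=
  fun X Y φ => QFun.untranspose ((lam X).comp (T.map φ.transpose))

/-- From a lax extension to a lax distributive law: `λ_X = ←(T̂((y_X)_*))`. -/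
def PsiLam (T : TwoFunctor Q) (ext : ExtFamily T) : LamFamily T :=
  fun X => (ext X.y.graph).transpose

/-- The canonical lax extension `T̂φ = (T ←φ)^* ∘ (T y_X)_*`. -/
def hatExt (T : TwoFunctor Q) : ExtFamily T :=
  fun X Y φ => ((T.map φ.transpose).cograph).comp (T.map X.y).graph

/-- `λ_X = y_{PX} ∘ sup_{PX}`: the flat distributive law of `P` over itself. -/
def lamP (X : QCat Q) : QFun X.P.P X.P.P := (QCat.y X.P).comp (supP X)

/-- `λ†_X = ((y_X)_†)^! ∘ y_{P†PX}`: the strict distributive law of `P†` over `P`. -/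
def lamd (X : QCat Q) : QFun X.P.Pd X.Pd.P := (pshb (cpsf X.y)).comp (QCat.y X.P.Pd)

/-- `Λ_X = y_{PP†X} ∘ ((y_X)_†)^!`: the flat distributive law of `P P†` over `P`. -/
def LamPPd (X : QCat Q) : QFun X.P.Pd.P X.Pd.P.P := (QCat.y X.Pd.P).comp (pshb (cpsf X.y))

/-- The multiplication `S_X = s_{P†X} ∘ (y†_{PP†X})^!` of the double presheaf 2-monad. -/
def Smult (X : QCat Q) : QFun X.Pd.P.Pd.P X.Pd.P := (supP X.Pd).comp (pshb (QCat.yd X.Pd.P))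

/-- `Λ†_X = (y_X^!)^{†!} ∘ y_{P†PPX}`: the flat distributive law of `P† P` over `P`. -/
def LamPdP (X : QCat Q) : QFun X.P.P.Pd X.P.Pd.P :=
  (pshf (cpsf (supP X))).comp (QCat.y X.P.P.Pd)

/-- The multiplication `S†_X = s†_{PX} ∘ (y_{P†PX})^†` of the double copresheaf
2-monad. -/
def Sdmult (X : QCat Q) : QFun X.P.Pd.P.Pd X.P.Pd := (infPd X.P).comp (cpsb (QCat.y X.P.Pd))

/-- Pointwise infimum of a family of `Q`-functors into a presheaf `Q`-category. -/
def QFun.iInfP {ι : Type u} {Z X : QCat Q} (F : ι → QFun Z X.P) : QFun Z X.P where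
  app s z := ⟨fun p x => ⨅ i, ((F i).app s z).1 p x, by
    intro p q x x'
    refine le_iInf fun i => ?_
    exact le_trans
      (Quantaloid.comp_le_comp (iInf_le (fun i => ((F i).app s z).1 q x') i) le_rfl)
      (((F i).app s z).2 p q x x')⟩
  mono := by
    intro s s' z z'
    refine le_iInf fun p => le_iInf fun x => Quantaloid.le_lda.mp ?_
    refine le_iInf fun i => ?_
    have h1 : Q.comp (Z.hom s s' z z') (⨅ j, ((F j).app s z).1 p x)
        ≤ Q.comp (Z.hom s s' z z') (((F i).app s z).1 p x) :=
      Quantaloid.comp_le_comp le_rfl (iInf_le _ i)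
    have h2 : Q.comp (Z.hom s s' z z') (((F i).app s z).1 p x)
        ≤ ((F i).app s' z').1 p x :=
      Quantaloid.le_lda.mpr
        (le_trans ((F i).mono s s' z z') (le_trans (iInf_le _ p) (iInf_le _ x)))
    exact le_trans h1 h2


/-!
Transposition `φ ↦ ←φ` identifies distributors `X ⇸ Y` with `Q`-functors `Y → P X`, as ordered
sets, and turns `ψ ∘ φ` into `φ^→ · ←ψ`, `g^* ∘ χ` into `←χ · g`, while `φ^→ = s_X · (←φ)_!`.
Read through it, the axioms of a lax extension become the laws of `λ`: lax functoriality (2) is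
(a) together with (c), and (3) is (b). Conditions (4) and (5) at `φ` are (d) and (e)
precomposed with `←φ` and `T T ←φ`; testing them at `φ = (y_X)_*`, whose transpose is the
identity, gives back the laws themselves. Conversely, a lax extension is determined by its
values on the graphs `(y_X)_*`:
`(←φ)^* ∘ (y_X)_* ≤ φ` and `(←φ)_* ∘ φ ≤ (y_X)_*`, so laxness of `T̂` and the adjunction
`(T g)_* ⊣ (T g)^*` give `T̂φ = (T ←φ)^* ∘ T̂(y_X)_*`.
-/

theorem QCat.le_P_hom_iff {X : QCat Q} {s s' : Q.Obj} {σ : X.P.el s} {σ' : X.P.el s'}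
    {u : Q.Hom s s'} :
    u ≤ X.P.hom s s' σ σ' ↔ ∀ p (x : X.el p), Q.comp u (σ.1 p x) ≤ σ'.1 p x := by
  constructor
  · intro h p x
    exact Quantaloid.le_lda.mpr (le_trans h (le_trans (iInf_le _ p) (iInf_le _ x)))
  · intro h
    exact le_iInf fun p => le_iInf fun x => Quantaloid.le_lda.mp (h p x)

theorem QCat.P_hom_comp_le {X : QCat Q} {s s' p : Q.Obj} (σ : X.P.el s) (σ' : X.P.el s')
    (x : X.el p) : Q.comp (X.P.hom s s' σ σ') (σ.1 p x) ≤ σ'.1 p x :=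
  QCat.le_P_hom_iff.mp le_rfl p x

theorem QCat.P_hom_y_app {X : QCat Q} {p s : Q.Obj} (x : X.el p) (σ : X.P.el s) :
    X.P.hom p s (X.y.app p x) σ = σ.1 p x := by
  apply le_antisymm
  · calc X.P.hom p s (X.y.app p x) σ
        = Q.comp (X.P.hom p s (X.y.app p x) σ) (Q.idm p) := (Q.comp_idm _).symm
      _ ≤ Q.comp (X.P.hom p s (X.y.app p x) σ) (X.hom p p x x) :=
          Quantaloid.comp_le_comp le_rfl (X.refl p x)
      _ ≤ σ.1 p x := QCat.P_hom_comp_le _ σ x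
  · exact QCat.le_P_hom_iff.mpr fun q x' => σ.2 q p x' x

namespace QFun

theorem ext_app {X Y : QCat Q} {f g : QFun X Y} (h : f.app = g.app) : f = g := by
  cases f; cases g; cases h; rfl

theorem ext_P {Z X : QCat Q} {f g : QFun Z X.P}
    (h : ∀ s (z : Z.el s) p (x : X.el p), (f.app s z).1 p x = (g.app s z).1 p x) :
    f = g :=
  ext_app (funext fun s => funext fun z => Subtype.ext (funext fun p => funext fun x => h s z p x))

theorem le_P_iff {Z X : QCat Q} {f g : QFun Z X.P} :
    f ≤ g ↔ ∀ s (z : Z.el s) p (x : X.el p), (f.app s z).1 p x ≤ (g.app s z).1 p x := by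
  constructor
  · intro h s z p x
    simpa only [Q.idm_comp] using QCat.le_P_hom_iff.mp (h s z) p x
  · intro h s z
    exact QCat.le_P_hom_iff.mpr fun p x => by rw [Q.idm_comp]; exact h s z p x

theorem comp_id {X Y : QCat Q} (f : QFun X Y) : f.comp (QFun.id X) = f := rfl

theorem comp_le_comp {X Y Z : QCat Q} {g g' : QFun Y Z} {f f' : QFun X Y}
    (hg : g ≤ g') (hf : f ≤ f') : g.comp f ≤ g'.comp f' := by
  intro p x
  calc Q.idm p = Q.comp (Q.idm p) (Q.idm p) := (Q.comp_idm _).symm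
    _ ≤ Q.comp (Z.hom p p (g.app p (f'.app p x)) (g'.app p (f'.app p x)))
          (Z.hom p p (g.app p (f.app p x)) (g.app p (f'.app p x))) :=
        Quantaloid.comp_le_comp (hg p (f'.app p x)) (le_trans (hf p x) (g.mono p p _ _))
    _ ≤ _ := Z.hom_comp_le _ _ _

end QFun

namespace QDist

theorem ext_rel {X Y : QCat Q} {φ ψ : QDist X Y} (h : φ.rel = ψ.rel) : φ = ψ := by
  cases φ; cases ψ; cases h; rfl

theorem comp_mono {X Y Z : QCat Q} {ψ ψ' : QDist Y Z} {φ φ' : QDist X Y}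
    (h1 : ψ ≤ ψ') (h2 : φ ≤ φ') : ψ.comp φ ≤ ψ'.comp φ' :=
  QRel.comp_mono h1 h2

theorem comp_assoc {W X Y Z : QCat Q} (χ : QDist Y Z) (ψ : QDist X Y) (φ : QDist W X) :
    (χ.comp ψ).comp φ = χ.comp (ψ.comp φ) :=
  ext_rel (QRel.comp_assoc _ _ _)

theorem comp_homDist {X Y : QCat Q} (φ : QDist X Y) : φ.comp X.homDist = φ :=
  le_antisymm φ.comp_hom_le (QRel.le_comp_hom φ.rel)

theorem homDist_comp {X Y : QCat Q} (φ : QDist X Y) : Y.homDist.comp φ = φ :=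
  le_antisymm φ.hom_comp_le (QRel.le_hom_comp φ.rel)

end QDist

namespace QFun

theorem comp_graph_rel {X Z W : QCat Q} (g : QFun W X) (χ : QDist X Z)
    (p q : Q.Obj) (w : W.el p) (z : Z.el q) :
    (χ.comp g.graph).rel p q w z = χ.rel p q (g.app p w) z := by
  apply le_antisymm
  · exact iSup₂_le fun r x => χ.rel_comp_hom (g.app p w) x z
  · calc χ.rel p q (g.app p w) z
        = Q.comp (χ.rel p q (g.app p w) z) (Q.idm p) := (Q.comp_idm _).symm
      _ ≤ Q.comp (χ.rel p q (g.app p w) z) (X.hom p p (g.app p w) (g.app p w)) :=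
          Quantaloid.comp_le_comp le_rfl (X.refl _ _)
      _ ≤ _ := le_iSup_of_le p
          (le_iSup (fun x : X.el p => Q.comp (χ.rel p q x z) (X.hom p p (g.app p w) x))
            (g.app p w))

theorem cograph_comp_rel {X Z W : QCat Q} (g : QFun W Z) (χ : QDist X Z)
    (p q : Q.Obj) (x : X.el p) (w : W.el q) :
    (g.cograph.comp χ).rel p q x w = χ.rel p q x (g.app q w) := by
  apply le_antisymm
  · exact iSup₂_le fun r z => χ.hom_comp_rel x z (g.app q w)
  · calc χ.rel p q x (g.app q w)
        = Q.comp (Q.idm q) (χ.rel p q x (g.app q w)) := (Q.idm_comp _).symm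
      _ ≤ Q.comp (Z.hom q q (g.app q w) (g.app q w)) (χ.rel p q x (g.app q w)) :=
          Quantaloid.comp_le_comp (Z.refl _ _) le_rfl
      _ ≤ _ := le_iSup_of_le q
          (le_iSup (fun z : Z.el q => Q.comp (Z.hom q q z (g.app q w)) (χ.rel p q x z))
            (g.app q w))

theorem graph_comp {X Y Z : QCat Q} (g : QFun Y Z) (f : QFun X Y) :
    (g.comp f).graph = g.graph.comp f.graph :=
  QDist.ext_rel (funext fun p => funext fun q => funext fun x => funext fun z =>
    (comp_graph_rel f g.graph p q x z).symm)

theorem graph_id (X : QCat Q) : (QFun.id X).graph = X.homDist := rfl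

theorem graph_le_iff {X Y : QCat Q} (g : QFun X Y) (χ : QDist X Y) :
    g.graph ≤ χ ↔ ∀ p (x : X.el p), Q.idm p ≤ χ.rel p p x (g.app p x) := by
  constructor
  · intro h p x
    exact le_trans (Y.refl p (g.app p x)) (h p p x (g.app p x))
  · intro h p q x y
    calc Y.hom p q (g.app p x) y
        = Q.comp (Y.hom p q (g.app p x) y) (Q.idm p) := (Q.comp_idm _).symm
      _ ≤ Q.comp (Y.hom p q (g.app p x) y) (χ.rel p p x (g.app p x)) :=
          Quantaloid.comp_le_comp le_rfl (h p x)
      _ ≤ χ.rel p q x y := χ.hom_comp_rel x (g.app p x) y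

theorem graph_anti {X Y : QCat Q} {f g : QFun X Y} (h : f ≤ g) : g.graph ≤ f.graph :=
  (graph_le_iff g f.graph).mpr h

theorem graph_comp_cograph_le {Y Z : QCat Q} (g : QFun Y Z) :
    g.graph.comp g.cograph ≤ Z.homDist :=
  fun _ _ _ _ => iSup₂_le fun _ _ => Z.hom_comp_le _ _ _

theorem homDist_le_cograph_comp_graph {Y Z : QCat Q} (g : QFun Y Z) :
    Y.homDist ≤ g.cograph.comp g.graph := by
  intro p q y y'
  calc Y.hom p q y y'
      = Q.comp (Y.hom p q y y') (Q.idm p) := (Q.comp_idm _).symm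
    _ ≤ Q.comp (Z.hom p q (g.app p y) (g.app q y')) (Z.hom p p (g.app p y) (g.app p y)) :=
        Quantaloid.comp_le_comp (g.mono p q y y') (Z.refl _ _)
    _ ≤ _ := le_iSup_of_le p
        (le_iSup (fun z : Z.el p => Q.comp (Z.hom p q z (g.app q y')) (Z.hom p p (g.app p y) z))
          (g.app p y))

theorem le_cograph_comp_of_graph_comp_le {A Y Z : QCat Q} (g : QFun Y Z) {χ : QDist A Y}
    {χ' : QDist A Z} (h : g.graph.comp χ ≤ χ') : χ ≤ g.cograph.comp χ' :=
  calc χ = Y.homDist.comp χ := (QDist.homDist_comp χ).symm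
    _ ≤ (g.cograph.comp g.graph).comp χ :=
        QDist.comp_mono (homDist_le_cograph_comp_graph g) le_rfl
    _ = g.cograph.comp (g.graph.comp χ) := QDist.comp_assoc _ _ _
    _ ≤ g.cograph.comp χ' := QDist.comp_mono le_rfl h

end QFun

theorem QDist.untranspose_transpose {X Y : QCat Q} (φ : QDist X Y) :
    φ.transpose.untranspose = φ :=
  QDist.ext_rel rfl

theorem QFun.transpose_untranspose {X Y : QCat Q} (g : QFun Y X.P) :
    g.untranspose.transpose = g :=
  QFun.ext_P fun _ _ _ _ => rfl

namespace QDist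

theorem transpose_le_transpose_iff {X Y : QCat Q} {φ ψ : QDist X Y} :
    φ.transpose ≤ ψ.transpose ↔ φ ≤ ψ := by
  rw [QFun.le_P_iff]
  exact ⟨fun h p q x y => h q y p x, fun h q y p x => h p q x y⟩

theorem transpose_comp {X Y Z : QCat Q} (ψ : QDist Y Z) (φ : QDist X Y) :
    (ψ.comp φ).transpose = φ.fwd.comp ψ.transpose :=
  QFun.ext_P fun _ _ _ _ => rfl

theorem transpose_cograph_comp {X Z W : QCat Q} (g : QFun W Z) (χ : QDist X Z) :
    (g.cograph.comp χ).transpose = χ.transpose.comp g :=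
  QFun.ext_P fun q w p x => QFun.cograph_comp_rel g χ p q x w

theorem cograph_transpose_comp_graph_y_le {X Y : QCat Q} (φ : QDist X Y) :
    φ.transpose.cograph.comp X.y.graph ≤ φ := by
  intro p q x y
  refine iSup₂_le fun s σ => ?_
  have h := X.P.hom_comp_le (X.y.app p x) σ (φ.transpose.app q y)
  rw [QCat.P_hom_y_app x (φ.transpose.app q y)] at h
  exact h

theorem graph_transpose_comp_le {X Y : QCat Q} (φ : QDist X Y) :
    φ.transpose.graph.comp φ ≤ X.y.graph := by
  intro p q x σ
  refine iSup₂_le fun r y => ?_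
  have h : φ.rel p r x y ≤ X.P.hom p r (X.y.app p x) (φ.transpose.app r y) :=
    (QCat.P_hom_y_app x (φ.transpose.app r y)).ge
  exact le_trans (Quantaloid.comp_le_comp le_rfl h) (X.P.hom_comp_le _ _ _)

end QDist

theorem QFun.cograph_transpose {X Y : QCat Q} (f : QFun X Y) :
    f.cograph.transpose = Y.y.comp f :=
  QFun.ext_P fun _ _ _ _ => rfl

theorem QFun.y_le_graph_transpose_comp {X Y : QCat Q} (f : QFun X Y) :
    X.y ≤ f.graph.transpose.comp f :=
  QFun.le_P_iff.mpr fun _ x _ x' => f.mono _ _ x' x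

theorem QCat.graph_y_transpose (X : QCat Q) : X.y.graph.transpose = QFun.id X.P :=
  QFun.ext_P fun _ σ _ x => QCat.P_hom_y_app x σ

theorem pshf_comp {X Y Z : QCat Q} (g : QFun Y Z) (f : QFun X Y) :
    pshf (g.comp f) = (pshf g).comp (pshf f) := by
  refine QFun.ext_P fun s σ q z => le_antisymm ?_ ?_
  · refine iSup₂_le fun p x => ?_
    have h1 : σ.1 p x ≤ ((pshf f).app s σ).1 p (f.app p x) := by
      calc σ.1 p x = Q.comp (σ.1 p x) (Q.idm p) := (Q.comp_idm _).symm
        _ ≤ Q.comp (σ.1 p x) (Y.hom p p (f.app p x) (f.app p x)) :=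
            Quantaloid.comp_le_comp le_rfl (Y.refl _ _)
        _ ≤ _ := le_iSup_of_le p (le_iSup (fun x' : X.el p =>
            Q.comp (σ.1 p x') (Y.hom p p (f.app p x) (f.app p x'))) x)
    exact le_trans (Quantaloid.comp_le_comp h1 le_rfl)
      (le_iSup_of_le p (le_iSup (fun y : Y.el p =>
        Q.comp (((pshf f).app s σ).1 p y) (Z.hom q p z (g.app p y))) (f.app p x)))
  · refine iSup₂_le fun r y => ?_
    change Q.comp (⨆ p, ⨆ x : X.el p, Q.comp (σ.1 p x) (Y.hom r p y (f.app p x)))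
        (Z.hom q r z (g.app r y)) ≤ _
    simp only [Quantaloid.iSup_comp]
    refine iSup₂_le fun p x => ?_
    rw [Q.comp_assoc]
    have h2 : Q.comp (Y.hom r p y (f.app p x)) (Z.hom q r z (g.app r y))
        ≤ Z.hom q p z (g.app p (f.app p x)) :=
      le_trans (Quantaloid.comp_le_comp (g.mono r p y (f.app p x)) le_rfl)
        (Z.hom_comp_le _ _ _)
    exact le_trans (Quantaloid.comp_le_comp le_rfl h2)
      (le_iSup_of_le p (le_iSup (fun x' : X.el p =>
        Q.comp (σ.1 p x') (Z.hom q p z (g.app p (f.app p x')))) x))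

theorem supP_comp_pshf {X Y : QCat Q} (g : QFun Y X.P) :
    (supP X).comp (pshf g) = g.untranspose.fwd := by
  refine QFun.ext_P fun s σ p x => le_antisymm ?_ ?_
  · refine iSup₂_le fun t τ => ?_
    change Q.comp (⨆ q, ⨆ y : Y.el q, Q.comp (σ.1 q y) (X.P.hom t q τ (g.app q y)))
        (X.P.hom p t (X.y.app p x) τ) ≤ _
    simp only [Quantaloid.iSup_comp]
    refine iSup₂_le fun q y => ?_
    rw [Q.comp_assoc]
    have h : Q.comp (X.P.hom t q τ (g.app q y)) (X.P.hom p t (X.y.app p x) τ)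
        ≤ (g.app q y).1 p x := by
      have h' := X.P.hom_comp_le (X.y.app p x) τ (g.app q y)
      rwa [QCat.P_hom_y_app x (g.app q y)] at h'
    exact le_trans (Quantaloid.comp_le_comp le_rfl h)
      (le_iSup_of_le q (le_iSup (fun y' : Y.el q => Q.comp (σ.1 q y') ((g.app q y').1 p x)) y))
  · refine iSup₂_le fun q y => ?_
    calc Q.comp (σ.1 q y) ((g.app q y).1 p x)
        = Q.comp (Q.comp (σ.1 q y) (Q.idm q)) ((g.app q y).1 p x) := by rw [Q.comp_idm]
      _ ≤ Q.comp (Q.comp (σ.1 q y) (X.P.hom q q (g.app q y) (g.app q y)))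
            (X.P.hom p q (X.y.app p x) (g.app q y)) :=
          Quantaloid.comp_le_comp
            (Quantaloid.comp_le_comp le_rfl (X.P.refl q (g.app q y)))
            (QCat.P_hom_y_app x (g.app q y)).ge
      _ ≤ _ := le_iSup_of_le q (le_iSup_of_le (g.app q y)
          (Quantaloid.comp_le_comp
            (le_iSup_of_le q (le_iSup (fun y' : Y.el q =>
              Q.comp (σ.1 q y') (X.P.hom q q (g.app q y) (g.app q y'))) y))
            le_rfl))

theorem QDist.fwd_eq_supP_comp_pshf {X Y : QCat Q} (φ : QDist X Y) :
    φ.fwd = (supP X).comp (pshf φ.transpose) := by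
  rw [supP_comp_pshf, QDist.untranspose_transpose]

theorem QCat.id_le_supP_comp_y (X : QCat Q) : QFun.id X.P ≤ (supP X).comp (QCat.y X.P) := by
  refine QFun.le_P_iff.mpr fun s σ p x => ?_
  calc σ.1 p x = Q.comp (σ.1 p x) (Q.idm p) := (Q.comp_idm _).symm
    _ ≤ Q.comp (X.P.hom p s (X.y.app p x) σ) (X.P.hom p p (X.y.app p x) (X.y.app p x)) :=
        Quantaloid.comp_le_comp (QCat.P_hom_y_app x σ).ge (X.P.refl p (X.y.app p x))
    _ ≤ _ := le_iSup_of_le p (le_iSup (fun τ : X.P.el p =>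
        Q.comp (X.P.hom p s τ σ) (X.P.hom p p (X.y.app p x) τ)) (X.y.app p x))

theorem QFun.y_comp_le_pshf_comp_y {X Y : QCat Q} (f : QFun X Y) :
    Y.y.comp f ≤ (pshf f).comp X.y := by
  refine QFun.le_P_iff.mpr fun p x q y' => ?_
  calc Y.hom q p y' (f.app p x)
      = Q.comp (Q.idm p) (Y.hom q p y' (f.app p x)) := (Q.idm_comp _).symm
    _ ≤ Q.comp (X.hom p p x x) (Y.hom q p y' (f.app p x)) :=
        Quantaloid.comp_le_comp (X.refl p x) le_rfl
    _ ≤ _ := le_iSup_of_le p (le_iSup (fun x' : X.el p =>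
        Q.comp (X.hom p p x' x) (Y.hom q p y' (f.app p x'))) x)

theorem graph_pshf_comp_graph_y_comp_cograph_le {X Y : QCat Q} (f : QFun X Y) :
    (pshf f).graph.comp (X.y.graph.comp f.cograph) ≤ Y.y.graph :=
  calc (pshf f).graph.comp (X.y.graph.comp f.cograph)
      = ((pshf f).comp X.y).graph.comp f.cograph := by
        rw [QFun.graph_comp, QDist.comp_assoc]
    _ ≤ (Y.y.comp f).graph.comp f.cograph :=
        QDist.comp_mono (QFun.graph_anti (QFun.y_comp_le_pshf_comp_y f)) le_rfl
    _ = Y.y.graph.comp (f.graph.comp f.cograph) := by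
        rw [QFun.graph_comp, QDist.comp_assoc]
    _ ≤ Y.y.graph.comp Y.homDist := QDist.comp_mono le_rfl (QFun.graph_comp_cograph_le f)
    _ = Y.y.graph := QDist.comp_homDist _

theorem graph_supP_comp_graph_y_comp_graph_y_le (X : QCat Q) :
    (supP X).graph.comp ((QCat.y X.P).graph.comp X.y.graph) ≤ X.y.graph :=
  calc (supP X).graph.comp ((QCat.y X.P).graph.comp X.y.graph)
      = ((supP X).comp (QCat.y X.P)).graph.comp X.y.graph := by
        rw [QFun.graph_comp, QDist.comp_assoc]
    _ ≤ (QFun.id X.P).graph.comp X.y.graph :=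
        QDist.comp_mono (QFun.graph_anti (QCat.id_le_supP_comp_y X)) le_rfl
    _ = X.y.graph := by rw [QFun.graph_id, QDist.homDist_comp]

section TwoFunctor

variable {T : TwoFunctor Q}

theorem phiExt_transpose (lam : LamFamily T) {X Y : QCat Q} (φ : QDist X Y) :
    (PhiExt T lam φ).transpose = (lam X).comp (T.map φ.transpose) :=
  QFun.transpose_untranspose _

theorem psiLam_phiExt (lam : LamFamily T) : PsiLam T (PhiExt T lam) = lam := by
  funext X
  change (PhiExt T lam X.y.graph).transpose = lam X
  rw [phiExt_transpose, QCat.graph_y_transpose, T.map_id, QFun.comp_id]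

theorem phiExt_mono (lam : LamFamily T) {X Y : QCat Q} {φ φ' : QDist X Y} (h : φ ≤ φ') :
    PhiExt T lam φ ≤ PhiExt T lam φ' := by
  rw [← QDist.transpose_le_transpose_iff, phiExt_transpose, phiExt_transpose]
  exact QFun.comp_le_comp le_rfl (T.map_mono (QDist.transpose_le_transpose_iff.mpr h))

theorem fwd_phiExt_comp_le {lam : LamFamily T} (ha : LawA T lam) (hc : LawC T lam)
    {X Y : QCat Q} (φ : QDist X Y) :
    (PhiExt T lam φ).fwd.comp (lam Y) ≤ (lam X).comp (T.map φ.fwd) := by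
  rw [(PhiExt T lam φ).fwd_eq_supP_comp_pshf, phiExt_transpose, pshf_comp,
    φ.fwd_eq_supP_comp_pshf, T.map_comp]
  calc ((supP (T.obj X)).comp ((pshf (lam X)).comp (pshf (T.map φ.transpose)))).comp (lam Y)
      = ((supP (T.obj X)).comp (pshf (lam X))).comp
          ((pshf (T.map φ.transpose)).comp (lam Y)) := rfl
    _ ≤ ((supP (T.obj X)).comp (pshf (lam X))).comp
          ((lam X.P).comp (T.map (pshf φ.transpose))) :=
        QFun.comp_le_comp le_rfl (ha Y X.P φ.transpose)
    _ = ((supP (T.obj X)).comp ((pshf (lam X)).comp (lam X.P))).comp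
          (T.map (pshf φ.transpose)) := rfl
    _ ≤ ((lam X).comp (T.map (supP X))).comp (T.map (pshf φ.transpose)) :=
        QFun.comp_le_comp (hc X) le_rfl

theorem phiExt_comp_le {lam : LamFamily T} (ha : LawA T lam) (hc : LawC T lam)
    {X Y Z : QCat Q} (φ : QDist X Y) (ψ : QDist Y Z) :
    (PhiExt T lam ψ).comp (PhiExt T lam φ) ≤ PhiExt T lam (ψ.comp φ) := by
  rw [← QDist.transpose_le_transpose_iff, QDist.transpose_comp, phiExt_transpose,
    phiExt_transpose, QDist.transpose_comp, T.map_comp]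
  exact QFun.comp_le_comp (fwd_phiExt_comp_le ha hc φ) le_rfl

theorem graph_le_phiExt_graph {lam : LamFamily T} (hb : LawB T lam) {X Y : QCat Q}
    (f : QFun X Y) : (T.map f).graph ≤ PhiExt T lam f.graph := by
  have h : QCat.y (T.obj X) ≤ ((lam X).comp (T.map f.graph.transpose)).comp (T.map f) := by
    refine le_trans (hb X) ?_
    have h' := QFun.comp_le_comp (le_refl (lam X)) (T.map_mono f.y_le_graph_transpose_comp)
    rwa [T.map_comp] at h'
  refine (QFun.graph_le_iff _ _).mpr fun p x => ?_
  have hx := QFun.le_P_iff.mp h p x p x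
  exact le_trans ((T.obj X).refl p x) hx

theorem cograph_le_phiExt_cograph {lam : LamFamily T} (hb : LawB T lam) {X Y : QCat Q}
    (f : QFun X Y) : (T.map f).cograph ≤ PhiExt T lam f.cograph := by
  rw [← QDist.transpose_le_transpose_iff, phiExt_transpose, QFun.cograph_transpose,
    QFun.cograph_transpose, T.map_comp]
  exact QFun.comp_le_comp (hb Y) le_rfl

theorem isLaxExt_phiExt {lam : LamFamily T} (h : IsDistLawABC T lam) :
    IsLaxExt T (PhiExt T lam) := by
  obtain ⟨ha, hb, hc⟩ := h
  exact ⟨fun _ _ _ _ => phiExt_mono lam, fun _ _ _ φ ψ => phiExt_comp_le ha hc φ ψ,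
    fun _ _ f => ⟨graph_le_phiExt_graph hb f, cograph_le_phiExt_cograph hb f⟩⟩

section LaxExt

variable {ext : ExtFamily T} (hext : IsLaxExt T ext)
include hext

theorem IsLaxExt.le_cograph_comp {X Y Z : QCat Q} {g : QFun Y Z} {φ : QDist X Y}
    {ψ : QDist X Z} (h : g.graph.comp φ ≤ ψ) : ext φ ≤ (T.map g).cograph.comp (ext ψ) := by
  obtain ⟨hmono, hcomp, hgc⟩ := hext
  refine QFun.le_cograph_comp_of_graph_comp_le _ ?_
  calc (T.map g).graph.comp (ext φ) ≤ (ext g.graph).comp (ext φ) :=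
        QDist.comp_mono (hgc _ _ g).1 le_rfl
    _ ≤ ext (g.graph.comp φ) := hcomp _ _ _ _ _
    _ ≤ ext ψ := hmono _ _ _ _ h

theorem phiExt_psiLam {X Y : QCat Q} (φ : QDist X Y) : PhiExt T (PsiLam T ext) φ = ext φ := by
  have ⟨hmono, hcomp, hgc⟩ := hext
  have e : PhiExt T (PsiLam T ext) φ = (T.map φ.transpose).cograph.comp (ext X.y.graph) := by
    rw [← QDist.untranspose_transpose ((T.map φ.transpose).cograph.comp _),
      QDist.transpose_cograph_comp]
    rfl
  rw [e]
  apply le_antisymm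
  · calc (T.map φ.transpose).cograph.comp (ext X.y.graph)
        ≤ (ext φ.transpose.cograph).comp (ext X.y.graph) :=
          QDist.comp_mono (hgc _ _ _).2 le_rfl
      _ ≤ ext (φ.transpose.cograph.comp X.y.graph) := hcomp _ _ _ _ _
      _ ≤ ext φ := hmono _ _ _ _ φ.cograph_transpose_comp_graph_y_le
  · exact hext.le_cograph_comp φ.graph_transpose_comp_le

theorem lawA_psiLam : LawA T (PsiLam T ext) := by
  have ⟨_, hcomp, hgc⟩ := hext
  intro X Y f
  have key : (ext X.y.graph).comp (T.map f).cograph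
      ≤ (T.map (pshf f)).cograph.comp (ext Y.y.graph) :=
    calc (ext X.y.graph).comp (T.map f).cograph
        ≤ (ext X.y.graph).comp (ext f.cograph) := QDist.comp_mono le_rfl (hgc _ _ f).2
      _ ≤ ext (X.y.graph.comp f.cograph) := hcomp _ _ _ _ _
      _ ≤ (T.map (pshf f)).cograph.comp (ext Y.y.graph) :=
          hext.le_cograph_comp (graph_pshf_comp_graph_y_comp_cograph_le f)
  have hkey := QDist.transpose_le_transpose_iff.mpr key
  rwa [QDist.transpose_comp, QDist.transpose_cograph_comp] at hkey

theorem lawB_psiLam : LawB T (PsiLam T ext) := fun X =>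
  le_trans (T.map X.y).y_le_graph_transpose_comp
    (QFun.comp_le_comp (QDist.transpose_le_transpose_iff.mpr (hext.2.2 _ _ X.y).1) le_rfl)

theorem lawC_psiLam : LawC T (PsiLam T ext) := by
  intro X
  have key : (ext (QCat.y X.P).graph).comp (ext X.y.graph)
      ≤ (T.map (supP X)).cograph.comp (ext X.y.graph) :=
    le_trans (hext.2.1 _ _ _ _ _)
      (hext.le_cograph_comp (graph_supP_comp_graph_y_comp_graph_y_le X))
  have hkey := QDist.transpose_le_transpose_iff.mpr key
  rw [QDist.transpose_comp, QDist.transpose_cograph_comp, QDist.fwd_eq_supP_comp_pshf] at hkey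
  exact hkey

theorem isDistLawABC_psiLam : IsDistLawABC T (PsiLam T ext) :=
  ⟨lawA_psiLam hext, lawB_psiLam hext, lawC_psiLam hext⟩

end LaxExt

end TwoFunctor

section TwoMonad

variable {M : TwoMonad Q}

theorem phiExt_law4_iff (lam : LamFamily M.toTwoFunctor) {X Y : QCat Q} (φ : QDist X Y) :
    φ.comp (M.unit X).cograph ≤ (M.unit Y).cograph.comp (PhiExt M.toTwoFunctor lam φ)
      ↔ (pshf (M.unit X)).comp φ.transpose ≤ ((lam X).comp (M.unit X.P)).comp φ.transpose := by
  rw [← QDist.transpose_le_transpose_iff, QDist.transpose_comp, QDist.transpose_cograph_comp,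
    phiExt_transpose]
  change _ ≤ (lam X).comp ((M.map φ.transpose).comp (M.unit Y)) ↔
    _ ≤ (lam X).comp ((M.unit X.P).comp φ.transpose)
  rw [M.unit_nat]
  rfl

theorem phiExt_law5_iff (lam : LamFamily M.toTwoFunctor) {X Y : QCat Q} (φ : QDist X Y) :
    (PhiExt M.toTwoFunctor lam (PhiExt M.toTwoFunctor lam φ)).comp (M.mult X).cograph
        ≤ (M.mult Y).cograph.comp (PhiExt M.toTwoFunctor lam φ)
      ↔ ((pshf (M.mult X)).comp ((lam (M.obj X)).comp (M.map (lam X)))).comp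
            (M.map (M.map φ.transpose))
        ≤ ((lam X).comp (M.mult X.P)).comp (M.map (M.map φ.transpose)) := by
  rw [← QDist.transpose_le_transpose_iff, QDist.transpose_comp, QDist.transpose_cograph_comp,
    phiExt_transpose, phiExt_transpose, M.map_comp]
  change _ ≤ (lam X).comp ((M.map φ.transpose).comp (M.mult Y)) ↔
    _ ≤ (lam X).comp ((M.mult X.P).comp (M.map (M.map φ.transpose)))
  rw [M.mult_nat]
  rfl

theorem extLaw4_phiExt_iff (lam : LamFamily M.toTwoFunctor) :
    ExtLaw4 M (PhiExt M.toTwoFunctor lam) ↔ LawD M lam := by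
  refine ⟨fun h X => ?_, fun hd X Y φ => (phiExt_law4_iff lam φ).mpr
    (QFun.comp_le_comp (hd X) le_rfl)⟩
  have hX := (phiExt_law4_iff lam X.y.graph).mp (h X X.P X.y.graph)
  rwa [QCat.graph_y_transpose, QFun.comp_id, QFun.comp_id] at hX

theorem extLaw5_phiExt_iff (lam : LamFamily M.toTwoFunctor) :
    ExtLaw5 M (PhiExt M.toTwoFunctor lam) ↔ LawE M lam := by
  refine ⟨fun h X => ?_, fun he X Y φ => (phiExt_law5_iff lam φ).mpr
    (QFun.comp_le_comp (he X) le_rfl)⟩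
  have hX := (phiExt_law5_iff lam X.y.graph).mp (h X X.P X.y.graph)
  rwa [QCat.graph_y_transpose, M.map_id, M.map_id, QFun.comp_id, QFun.comp_id] at hX

theorem isMonadLaxExt_phiExt {lam : LamFamily M.toTwoFunctor} (h : IsDistLaw M lam) :
    IsMonadLaxExt M (PhiExt M.toTwoFunctor lam) :=
  ⟨isLaxExt_phiExt h.1, (extLaw4_phiExt_iff lam).mpr h.2.1, (extLaw5_phiExt_iff lam).mpr h.2.2⟩

theorem isDistLaw_psiLam {ext : ExtFamily M.toTwoFunctor} (h : IsMonadLaxExt M ext) :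
    IsDistLaw M (PsiLam M.toTwoFunctor ext) := by
  obtain ⟨hext, h4, h5⟩ := h
  refine ⟨isDistLawABC_psiLam hext, (extLaw4_phiExt_iff _).mp ?_, (extLaw5_phiExt_iff _).mp ?_⟩
  · intro X Y φ
    rw [phiExt_psiLam hext]
    exact h4 X Y φ
  · intro X Y φ
    rw [phiExt_psiLam hext, phiExt_psiLam hext]
    exact h5 X Y φ

end TwoMonad

/-- for any 2-monad `𝕋 = (T,m,e)` on `Q`-Cat, lax extensions of `𝕋`
to `Q`-Dist correspond bijectively to distributive laws of `𝕋` over the presheaf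
2-monad, via `←(T̂φ) = λ_X ∘ T(←φ)` and `λ_X = ←(T̂((y_X)_*))`; in particular, under
this correspondence `T̂` satisfies (4) iff `λ` satisfies (d), and `T̂` satisfies (5)
iff `λ` satisfies (e). -/
theorem statement16 (Q : Quantaloid.{u}) (M : TwoMonad Q) :
    (∀ lam : LamFamily M.toTwoFunctor, IsDistLaw M lam →
      IsMonadLaxExt M (PhiExt M.toTwoFunctor lam)) ∧
    (∀ ext : ExtFamily M.toTwoFunctor, IsMonadLaxExt M ext →
      IsDistLaw M (PsiLam M.toTwoFunctor ext)) ∧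
    (∀ lam : LamFamily M.toTwoFunctor, IsDistLaw M lam →
      PsiLam M.toTwoFunctor (PhiExt M.toTwoFunctor lam) = lam) ∧
    (∀ ext : ExtFamily M.toTwoFunctor, IsMonadLaxExt M ext →
      ∀ (X Y : QCat Q) (φ : QDist X Y),
        PhiExt M.toTwoFunctor (PsiLam M.toTwoFunctor ext) φ = ext φ) ∧
    (∀ lam : LamFamily M.toTwoFunctor, IsDistLawABC M.toTwoFunctor lam →
      ((ExtLaw4 M (PhiExt M.toTwoFunctor lam) ↔ LawD M lam) ∧
       (ExtLaw5 M (PhiExt M.toTwoFunctor lam) ↔ LawE M lam))) :=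
  ⟨fun _ h => isMonadLaxExt_phiExt h,
   fun _ h => isDistLaw_psiLam h,
   fun lam _ => psiLam_phiExt lam,
   fun _ h _ _ φ => phiExt_psiLam h.1 φ,
   fun lam _ => ⟨extLaw4_phiExt_iff lam, extLaw5_phiExt_iff lam⟩⟩

end QT
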